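/- For integers 2 ≤ s ≤ r, G₁(r,s) < 2^s · (s(r−s)·ln 2 + 2·ln 2 + 1), where ln denotes the natural logarithm. -/

import Mathlib

/-- `A ⊆ F₂^r` is a *generic `(r,s)`-erasure correcting set* if for every `r × s` matrix `M`
over `F₂` of rank `s` there is `a ∈ A` such that the row vector `a·M` has Hamming weight `1`. -/
def IsGenericSet (r s : ℕ) (A : Set (Fin r → ZMod 2)) : Prop :=
  ∀ M : Matrix (Fin r) (Fin s) (ZMod 2), M.rank = s →
    ∃ a ∈ A, hammingNorm (Matrix.vecMul a M) = 1

/-- `F(r,s)`: the minimum cardinality of a generic `(r,s)`-set. -/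
noncomputable def Fgen (r s : ℕ) : ℕ :=
  sInf {n | ∃ A : Finset (Fin r → ZMod 2), IsGenericSet r s ↑A ∧ A.card = n}

/-- The standard bilinear form `⟨x,y⟩ = ∑ i, x i * y i` on `F₂^r`. -/
def bform {r : ℕ} (x y : Fin r → ZMod 2) : ZMod 2 := ∑ i, x i * y i

/-- `A ⊆ F₂^r` is an *(r,s)-set* if for every `s` linearly independent vectors `v₁, …, v_s`
there is `c ∈ A` with `⟨c, v_j⟩ = 1` for all `j`. -/
def IsRSSet (r s : ℕ) (A : Set (Fin r → ZMod 2)) : Prop :=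
  ∀ v : Fin s → (Fin r → ZMod 2), LinearIndependent (ZMod 2) v →
    ∃ c ∈ A, ∀ j, bform c (v j) = 1

/-- `G₁(r,s)`: the minimum cardinality of an `(r,s)`-set. -/
noncomputable def G1 (r s : ℕ) : ℕ :=
  sInf {n | ∃ A : Finset (Fin r → ZMod 2), IsRSSet r s ↑A ∧ A.card = n}

/-- `A ⊆ F₂^r` is an *(r,s)-good set* if for every `s` linearly independent vectors
`v₁, …, v_s` and every `x ∈ F₂^s` there is `c ∈ A` with `⟨c, v_j⟩ = x j` for all `j`. -/
def IsGoodSet (r s : ℕ) (A : Set (Fin r → ZMod 2)) : Prop :=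
  ∀ v : Fin s → (Fin r → ZMod 2), LinearIndependent (ZMod 2) v →
    ∀ x : Fin s → ZMod 2, ∃ c ∈ A, ∀ j, bform c (v j) = x j

/-- `G(r,s)`: the minimum cardinality of an `(r,s)`-good set. -/
noncomputable def Ggood (r s : ℕ) : ℕ :=
  sInf {n | ∃ A : Finset (Fin r → ZMod 2), IsGoodSet r s ↑A ∧ A.card = n}

/-- A linear code `C ⊆ F₂^ι` is *s-wise intersecting* if every `s` linearly independent
codewords have a common coordinate where they are all nonzero. -/
def IsIntersectingCode {ι : Type*} (s : ℕ) (C : Submodule (ZMod 2) (ι → ZMod 2)) : Prop :=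
  ∀ u : Fin s → (ι → ZMod 2), (∀ j, u j ∈ C) → LinearIndependent (ZMod 2) u →
    ∃ i, ∀ j, u j i ≠ 0

/-- `n(k,s)`: the minimum length `n` for which an `s`-wise intersecting `[n,k]` code exists. -/
noncomputable def minIntLen (k s : ℕ) : ℕ :=
  sInf {n | ∃ C : Submodule (ZMod 2) (Fin n → ZMod 2),
    Module.finrank (ZMod 2) C = k ∧ IsIntersectingCode s C}

/-- The Gaussian binomial coefficient `[k choose s]₂` as a real number. -/
noncomputable def gaussBinom (k s : ℕ) : ℝ :=
  ∏ i ∈ Finset.range s, ((2:ℝ)^(k-i) - 1) / ((2:ℝ)^(s-i) - 1)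

/-!
A vector `c` satisfies `⟨c, v_j⟩ = 1` for all `j` exactly when the functional `⟨c, ·⟩`, restricted
to `W = span v`, is the functional taking the value `1` on the basis `v`. Hence `A` is an
`(r,s)`-set as soon as it meets every fibre of `c ↦ ⟨c, ·⟩|_W`, for every `s`-dimensional `W`.
There are `N · 2^s` such fibres (`N` the number of `s`-dimensional subspaces), each of density
`2^{-s}`. By averaging, `n` vectors can be chosen that miss at most `N · 2^s (1 - 2^{-s})^n` of
them; adding one vector per missed fibre and taking `n = ⌈2^s ln N⌉` gives
`G₁(r,s) < 2^s ln N + 1 + 2^s`. Finally `N · |GL_s(F₂)| ≤ 2^{rs}` and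
`|GL_s(F₂)| ≥ 2^{s²} (1 + 2^{1-s}) / 4`, so `ln N + 2^{-s} ≤ s(r-s) ln 2 + 2 ln 2`.
-/

open Finset Module Submodule

section HittingSet

variable {X ι : Type*} [Fintype X] [DecidableEq X] [Nonempty X]

theorem exists_tuple_card_missed_le (J : Finset ι) (E : ι → Finset X) {p : ℝ}
    (hE : ∀ i ∈ J, p * Fintype.card X ≤ #(E i)) (n : ℕ) :
    ∃ a : Fin n → X, (#{i ∈ J | ∀ t, a t ∉ E i} : ℝ) ≤ #J * (1 - p) ^ n := by
  have hcompl (i) (hi : i ∈ J) : (#(E i)ᶜ : ℝ) ≤ (1 - p) * Fintype.card X := by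
    rw [card_compl, Nat.cast_sub (card_le_univ _)]
    linarith [hE i hi]
  have hcount : ∑ a : Fin n → X, #{i ∈ J | ∀ t, a t ∉ E i} = ∑ i ∈ J, #(E i)ᶜ ^ n := by
    simp only [card_filter]
    rw [sum_comm]
    refine sum_congr rfl fun i _ => ?_
    rw [← Fintype.card_piFinset_const, ← card_filter]
    congr 1
    ext a
    simp [Fintype.mem_piFinset]
  have hsum : ∑ a : Fin n → X, (#{i ∈ J | ∀ t, a t ∉ E i} : ℝ)
      ≤ ∑ _a : Fin n → X, #J * (1 - p) ^ n := by
    calc ∑ a : Fin n → X, (#{i ∈ J | ∀ t, a t ∉ E i} : ℝ)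
        = ∑ i ∈ J, (#(E i)ᶜ : ℝ) ^ n := by exact_mod_cast hcount
      _ ≤ ∑ i ∈ J, ((1 - p) * Fintype.card X) ^ n :=
          sum_le_sum fun i hi => pow_le_pow_left₀ (Nat.cast_nonneg _) (hcompl i hi) n
      _ = ∑ _a : Fin n → X, #J * (1 - p) ^ n := by
          rw [sum_const, sum_const, card_univ, Fintype.card_fun, Fintype.card_fin, nsmul_eq_mul,
            nsmul_eq_mul, mul_pow]
          push_cast
          ring
  obtain ⟨a, -, ha⟩ := exists_le_of_sum_le univ_nonempty hsum
  exact ⟨a, ha⟩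

theorem exists_hitting_finset_card_le (J : Finset ι) (E : ι → Finset X) {p : ℝ} (hp : 0 < p)
    (hE : ∀ i ∈ J, p * Fintype.card X ≤ #(E i)) (n : ℕ) :
    ∃ A : Finset X, (∀ i ∈ J, ∃ x ∈ A, x ∈ E i) ∧ (#A : ℝ) ≤ n + #J * (1 - p) ^ n := by
  have hne (i) (hi : i ∈ J) : (E i).Nonempty := by
    rw [← card_pos, ← Nat.cast_pos (α := ℝ)]
    exact lt_of_lt_of_le (by positivity) (hE i hi)
  choose! pick hpick using hne
  obtain ⟨a, ha⟩ := exists_tuple_card_missed_le J E hE n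
  set U := {i ∈ J | ∀ t, a t ∉ E i}
  refine ⟨univ.image a ∪ U.image pick, fun i hi => ?_, ?_⟩
  · by_cases hhit : ∃ t, a t ∈ E i
    · obtain ⟨t, ht⟩ := hhit
      exact ⟨a t, mem_union_left _ (mem_image_of_mem a (mem_univ t)), ht⟩
    · push Not at hhit
      exact ⟨pick i, mem_union_right _ (mem_image_of_mem pick (by simp [U, hi, hhit])),
        hpick i hi⟩
  · have hcard : #(univ.image a ∪ U.image pick) ≤ n + #U :=
      calc _ ≤ #(univ.image a) + #(U.image pick) := card_union_le _ _
        _ ≤ n + #U := by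
          gcongr
          · exact card_image_le.trans (by simp)
          · exact card_image_le
    calc (#(univ.image a ∪ U.image pick) : ℝ) ≤ n + #U := by exact_mod_cast hcard
      _ ≤ n + #J * (1 - p) ^ n := by linarith

end HittingSet

theorem card_fiber_mul_card_of_surjective {G H F : Type*} [AddGroup G] [AddGroup H] [Fintype G]
    [Fintype H] [DecidableEq H] [FunLike F G H] [AddMonoidHomClass F G H] (f : F)
    (hf : Function.Surjective f) (y : H) :
    #{x | f x = y} * Fintype.card H = Fintype.card G := by
  have hfiber (y : H) : #{x | f x = y} = #{x | f x = 0} := by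
    obtain ⟨x₀, rfl⟩ := hf y
    refine card_nbij' (fun x => -x₀ + x) (fun x => x₀ + x) ?_ ?_ ?_ ?_ <;>
      intro x hx <;> simp_all [map_add, map_neg]
  have hsum := card_eq_sum_card_fiberwise (s := univ) (t := univ) (f := f) (by simp)
  rw [sum_congr rfl fun y _ => hfiber y, sum_const, smul_eq_mul, card_univ, card_univ] at hsum
  rw [hfiber, hsum, mul_comm]

section DotProductRestrict

variable {K n : Type*} [Field K] [Fintype n] [DecidableEq n]

noncomputable def dotProductRestrict (W : Submodule K (n → K)) :
    (n → K) →ₗ[K] Module.Dual K W :=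
  W.subtype.dualMap ∘ₗ (dotProductEquiv K n).toLinearMap

@[simp]
theorem dotProductRestrict_apply (W : Submodule K (n → K)) (c : n → K) (w : W) :
    dotProductRestrict W c w = c ⬝ᵥ (w : n → K) := rfl

theorem dotProductRestrict_surjective (W : Submodule K (n → K)) :
    Function.Surjective (dotProductRestrict W) :=
  (LinearMap.dualMap_surjective_of_injective W.injective_subtype).comp
    (dotProductEquiv K n).surjective

theorem card_fiber_dotProductRestrict [Fintype K] (W : Submodule K (n → K))
    [Fintype (Module.Dual K W)] [DecidableEq (Module.Dual K W)] (φ : Module.Dual K W) :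
    #{c | dotProductRestrict W c = φ} * Fintype.card K ^ finrank K W =
      Fintype.card K ^ Fintype.card n := by
  rw [← Subspace.dual_finrank_eq, ← Module.card_eq_pow_finrank, ← Fintype.card_fun]
  exact card_fiber_mul_card_of_surjective _ (dotProductRestrict_surjective W) φ

end DotProductRestrict

section SubspaceCount

variable {K V : Type*} [Field K] [Fintype K] [AddCommGroup V] [Module K V] [Finite V]

noncomputable def linearIndependentSpanEquiv {k : ℕ} (W : Submodule K V) (hW : finrank K W = k) :
    {s : {s : Fin k → V // LinearIndependent K s} // span K (Set.range s.1) = W} ≃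
      {u : Fin k → W // LinearIndependent K u} where
  toFun s := ⟨fun j => ⟨s.1.1 j, s.2.le (subset_span ⟨j, rfl⟩)⟩,
    LinearIndependent.of_comp W.subtype s.1.2⟩
  invFun u := ⟨⟨W.subtype ∘ u.1, u.2.map' _ W.ker_subtype⟩, by
    refine eq_of_le_of_finrank_eq (span_le.mpr ?_) ?_
    · rintro _ ⟨j, rfl⟩
      exact (u.1 j).2
    · rw [finrank_span_eq_card (u.2.map' _ W.ker_subtype), Fintype.card_fin, hW]⟩
  left_inv _ := rfl
  right_inv _ := rfl

theorem card_finrank_eq_mul_prod {k : ℕ} (hk : k ≤ finrank K V) :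
    Nat.card {W : Submodule K V // finrank K W = k} *
        ∏ i : Fin k, (Fintype.card K ^ k - Fintype.card K ^ i.val) =
      ∏ i : Fin k, (Fintype.card K ^ finrank K V - Fintype.card K ^ i.val) := by
  have := Fintype.ofFinite {W : Submodule K V // finrank K W = k}
  let spanOf (s : {s : Fin k → V // LinearIndependent K s}) :
      {W : Submodule K V // finrank K W = k} :=
    ⟨span K (Set.range s.1), by rw [finrank_span_eq_card s.2, Fintype.card_fin]⟩
  have hfiber (W : {W : Submodule K V // finrank K W = k}) :
      Nat.card {s // spanOf s = W} =
        ∏ i : Fin k, (Fintype.card K ^ k - Fintype.card K ^ i.val) := by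
    have hcard := card_linearIndependent (K := K) (V := W.1) W.2.ge
    rw [W.2] at hcard
    rw [← hcard]
    exact Nat.card_congr ((Equiv.subtypeEquivRight fun _ => Subtype.ext_iff).trans
      (linearIndependentSpanEquiv W.1 W.2))
  rw [← card_linearIndependent hk, ← Nat.card_congr (Equiv.sigmaFiberEquiv spanOf),
    Nat.card_sigma, sum_congr rfl fun W _ => hfiber W, sum_const, smul_eq_mul, card_univ,
    Nat.card_eq_fintype_card]

end SubspaceCount

theorem lt_of_forall_le_add_div_mul_pow {G M t : ℝ} (ht0 : 0 < t) (ht1 : t ≤ 1) (hM : 1 ≤ M)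
    (h : ∀ n : ℕ, G ≤ n + M / t * (1 - t) ^ n) : G < Real.log M / t + 1 + 1 / t := by
  set n := ⌈Real.log M / t⌉₊
  have hn : Real.log M ≤ t * n := by
    rw [← div_le_iff₀' ht0]
    exact Nat.le_ceil _
  have hpow : (1 - t) ^ n ≤ M⁻¹ := calc
    (1 - t) ^ n ≤ Real.exp (-t) ^ n :=
      pow_le_pow_left₀ (by linarith) (by linarith [Real.add_one_le_exp (-t)]) n
    _ = Real.exp (-(t * n)) := by rw [← Real.exp_nat_mul]; ring_nf
    _ ≤ Real.exp (-Real.log M) := Real.exp_le_exp.mpr (by linarith)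
    _ = M⁻¹ := by rw [Real.exp_neg, Real.exp_log (by linarith)]
  have hceil : (n : ℝ) < Real.log M / t + 1 :=
    Nat.ceil_lt_add_one (div_nonneg (Real.log_nonneg hM) ht0.le)
  calc G ≤ n + M / t * (1 - t) ^ n := h n
    _ ≤ n + M / t * M⁻¹ := by gcongr
    _ = n + 1 / t := by field_simp
    _ < Real.log M / t + 1 + 1 / t := by linarith

theorem two_pow_mul_le_four_mul_prod {s : ℕ} (hs : 1 ≤ s) :
    (2 : ℝ) ^ (s * s) * (1 + 2 / 2 ^ s) ≤ 4 * ∏ i ∈ range s, ((2 : ℝ) ^ s - 2 ^ i) := by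
  induction s, hs using Nat.le_induction with
  | base => norm_num
  | succ s hs ih =>
    have hrec : ∏ i ∈ range (s + 1), ((2 : ℝ) ^ (s + 1) - 2 ^ i) =
        (2 * 2 ^ s - 1) * 2 ^ s * ∏ i ∈ range s, ((2 : ℝ) ^ s - 2 ^ i) := by
      have hdouble (i : ℕ) : (2 : ℝ) ^ (s + 1) - 2 ^ (i + 1) = 2 * (2 ^ s - 2 ^ i) := by ring
      rw [prod_range_succ', pow_zero, mul_comm]
      simp only [hdouble, prod_mul_distrib, prod_const, card_range]
      ring
    have hu : (2 : ℝ) ≤ 2 ^ s := by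
      calc (2 : ℝ) = 2 ^ 1 := by norm_num
        _ ≤ 2 ^ s := pow_le_pow_right₀ (by norm_num) hs
    have hsq : (2 : ℝ) ^ ((s + 1) * (s + 1)) = 2 ^ (s * s) * (2 ^ s) ^ 2 * 2 := by
      ring
    rw [hrec, hsq]
    set u : ℝ := 2 ^ s
    have hstep := mul_le_mul_of_nonneg_left ih (by nlinarith : 0 ≤ (2 * u - 1) * u)
    calc (2 : ℝ) ^ (s * s) * u ^ 2 * 2 * (1 + 2 / 2 ^ (s + 1))
        ≤ (2 * u - 1) * u * (2 ^ (s * s) * (1 + 2 / u)) := by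
          rw [show (2 : ℝ) ^ (s + 1) = 2 * u from pow_succ' 2 s]
          field_simp
          nlinarith
      _ ≤ _ := by linarith

noncomputable def numSubspaces (r s : ℕ) : ℕ :=
  Nat.card {W : Submodule (ZMod 2) (Fin r → ZMod 2) // finrank (ZMod 2) W = s}

theorem numSubspaces_mul_prod {r s : ℕ} (hsr : s ≤ r) :
    (numSubspaces r s : ℝ) * ∏ i ∈ range s, ((2 : ℝ) ^ s - 2 ^ i) =
      ∏ i ∈ range s, ((2 : ℝ) ^ r - 2 ^ i) := by
  have hcast (m : ℕ) (hm : s ≤ m) : ((∏ i : Fin s, (2 ^ m - 2 ^ i.val) : ℕ) : ℝ) =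
      ∏ i ∈ range s, ((2 : ℝ) ^ m - 2 ^ i) := by
    rw [Nat.cast_prod, Fin.prod_univ_eq_prod_range (fun i => (((2 ^ m - 2 ^ i : ℕ)) : ℝ))]
    refine prod_congr rfl fun i hi => ?_
    rw [Nat.cast_sub (Nat.pow_le_pow_right two_pos (by grind)), Nat.cast_pow, Nat.cast_pow,
      Nat.cast_ofNat]
  have h := card_finrank_eq_mul_prod (K := ZMod 2) (V := Fin r → ZMod 2) (k := s)
    (by simpa using hsr)
  simp only [ZMod.card, finrank_fin_fun] at h
  rw [← hcast s le_rfl, ← hcast r hsr, ← Nat.cast_mul, numSubspaces, h]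

theorem one_le_numSubspaces {r s : ℕ} (hsr : s ≤ r) : 1 ≤ numSubspaces r s := by
  have hpos : 0 < ∏ i ∈ range s, ((2 : ℝ) ^ r - 2 ^ i) :=
    prod_pos fun i hi => sub_pos.mpr
      (pow_lt_pow_right₀ one_lt_two ((mem_range.mp hi).trans_le hsr))
  rw [← numSubspaces_mul_prod hsr] at hpos
  exact_mod_cast pos_of_mul_pos_left hpos (prod_nonneg fun i hi => sub_nonneg.mpr
    (pow_le_pow_right₀ one_le_two (mem_range.mp hi).le))

theorem numSubspaces_mul_le {r s : ℕ} (hs : 1 ≤ s) (hsr : s ≤ r) :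
    (numSubspaces r s : ℝ) * (1 + 2 / 2 ^ s) ≤ 4 * 2 ^ (s * (r - s)) := by
  have hprod : ∏ i ∈ range s, ((2 : ℝ) ^ r - 2 ^ i) ≤ 2 ^ (s * s) * 2 ^ (s * (r - s)) := calc
    _ ≤ ∏ _i ∈ range s, (2 : ℝ) ^ r :=
      prod_le_prod (fun i hi => sub_nonneg.mpr
        (pow_le_pow_right₀ one_le_two ((mem_range.mp hi).le.trans hsr)))
        fun i _ => sub_le_self _ (by positivity)
    _ = 2 ^ (s * s) * 2 ^ (s * (r - s)) := by
      rw [prod_const, card_range, ← pow_mul, ← pow_add]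
      congr 1
      rw [← Nat.mul_add, Nat.add_sub_cancel' hsr, mul_comm]
  have hP := two_pow_mul_le_four_mul_prod hs
  have h := numSubspaces_mul_prod hsr
  have hpow : (0 : ℝ) < 2 ^ (s * s) := by positivity
  have hN : (0 : ℝ) ≤ numSubspaces r s := Nat.cast_nonneg _
  nlinarith [mul_le_mul_of_nonneg_left hP hN]

theorem log_numSubspaces_add_le {r s : ℕ} (hs : 1 ≤ s) (hsr : s ≤ r) :
    Real.log (numSubspaces r s) + ((2 : ℝ) ^ s)⁻¹ ≤
      (s : ℝ) * ((r : ℝ) - s) * Real.log 2 + 2 * Real.log 2 := by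
  set t : ℝ := ((2 : ℝ) ^ s)⁻¹
  have ht : 0 < t := by positivity
  have ht1 : t ≤ 1 := inv_le_one_of_one_le₀ (one_le_pow₀ one_le_two)
  have hN : (0 : ℝ) < numSubspaces r s := by exact_mod_cast one_le_numSubspaces hsr
  have hlog1 : t ≤ Real.log (1 + 2 * t) := by
    refine le_trans ?_ (Real.le_log_one_add_of_nonneg (by positivity : 0 ≤ 2 * t))
    rw [le_div_iff₀ (by positivity)]
    nlinarith
  have hbound : Real.log (numSubspaces r s) + Real.log (1 + 2 * t) ≤
      Real.log 4 + (s * (r - s) : ℕ) * Real.log 2 := by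
    rw [← Real.log_mul hN.ne' (by positivity), ← Real.log_pow, ← Real.log_mul (by norm_num)
      (by positivity)]
    refine Real.log_le_log (by positivity) ?_
    simpa [t, div_eq_mul_inv] using numSubspaces_mul_le hs hsr
  have hlog4 : Real.log 4 = 2 * Real.log 2 := by
    rw [show (4 : ℝ) = 2 ^ 2 by norm_num, Real.log_pow, Nat.cast_ofNat]
  rw [Nat.cast_mul, Nat.cast_sub hsr, hlog4] at hbound
  linarith

theorem isRSSet_of_forall_exists_dotProductRestrict_eq {r s : ℕ} {A : Set (Fin r → ZMod 2)}
    (hA : ∀ W : Submodule (ZMod 2) (Fin r → ZMod 2), finrank (ZMod 2) W = s →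
      ∀ φ : Module.Dual (ZMod 2) W, ∃ c ∈ A, dotProductRestrict W c = φ) :
    IsRSSet r s A := by
  intro v hv
  let b := Basis.span hv
  obtain ⟨c, hcA, hc⟩ := hA _ (by rw [finrank_span_eq_card hv, Fintype.card_fin])
    (b.constr (ZMod 2) fun _ => 1)
  refine ⟨c, hcA, fun j => ?_⟩
  have hcj := LinearMap.congr_fun hc (b j)
  rwa [Basis.constr_basis, dotProductRestrict_apply, Basis.span_apply] at hcj

theorem G1_le_add_mul_pow (r s n : ℕ) :
    (G1 r s : ℝ) ≤ n + numSubspaces r s * 2 ^ s * (1 - (2 ^ s)⁻¹) ^ n := by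
  classical
  have (W : Submodule (ZMod 2) (Fin r → ZMod 2)) : Finite (Module.Dual (ZMod 2) W) :=
    Module.finite_of_finite (ZMod 2)
  have (W : Submodule (ZMod 2) (Fin r → ZMod 2)) := Fintype.ofFinite (Module.Dual (ZMod 2) W)
  let ι := Σ W : {W : Submodule (ZMod 2) (Fin r → ZMod 2) // finrank (ZMod 2) W = s},
    Module.Dual (ZMod 2) W.1
  have := Fintype.ofFinite {W : Submodule (ZMod 2) (Fin r → ZMod 2) // finrank (ZMod 2) W = s}
  have hfiber (i : ι) : ((2 : ℝ) ^ s)⁻¹ * Fintype.card (Fin r → ZMod 2) ≤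
      #{c | dotProductRestrict i.1.1 c = i.2} := by
    have h := card_fiber_dotProductRestrict i.1.1 i.2
    rw [i.1.2, ZMod.card, Fintype.card_fin] at h
    rw [Fintype.card_fun, ZMod.card, Fintype.card_fin, inv_mul_le_iff₀ (by positivity), mul_comm]
    exact_mod_cast h.ge
  obtain ⟨A, hA, hcard⟩ := exists_hitting_finset_card_le (univ : Finset ι)
    (fun i => {c | dotProductRestrict i.1.1 c = i.2}) (by positivity) (fun i _ => hfiber i) n
  have hRS : IsRSSet r s (A : Set (Fin r → ZMod 2)) :=
    isRSSet_of_forall_exists_dotProductRestrict_eq fun W hW φ => by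
      simpa using hA (⟨⟨W, hW⟩, φ⟩ : ι) (mem_univ _)
  have hι : (#(univ : Finset ι) : ℝ) = numSubspaces r s * 2 ^ s := by
    have hdual (W : {W : Submodule (ZMod 2) (Fin r → ZMod 2) // finrank (ZMod 2) W = s}) :
        Fintype.card (Module.Dual (ZMod 2) W.1) = 2 ^ s := by
      rw [Module.card_eq_pow_finrank (K := ZMod 2), Subspace.dual_finrank_eq, W.2, ZMod.card]
    rw [card_univ, Fintype.card_sigma, sum_congr rfl fun W _ => hdual W, sum_const, card_univ,
      smul_eq_mul, numSubspaces, Nat.card_eq_fintype_card]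
    push_cast
    ring
  have hG1 : G1 r s ≤ #A := Nat.sInf_le ⟨A, hRS, rfl⟩
  calc (G1 r s : ℝ) ≤ #A := by exact_mod_cast hG1
    _ ≤ _ := by rwa [hι] at hcard

/-- For `2 ≤ s ≤ r`, `G₁(r,s) < 2^s · (s(r-s)·ln 2 + 2·ln 2 + 1)`. -/
theorem statement15 (r s : ℕ) (hs : 2 ≤ s) (hsr : s ≤ r) :
    (G1 r s : ℝ) <
      (2:ℝ) ^ s * ((s:ℝ) * ((r:ℝ) - s) * Real.log 2 + 2 * Real.log 2 + 1) := by
  have ht : (0 : ℝ) < ((2 : ℝ) ^ s)⁻¹ := by positivity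
  have ht1 : ((2 : ℝ) ^ s)⁻¹ ≤ 1 := inv_le_one_of_one_le₀ (one_le_pow₀ one_le_two)
  have hG := lt_of_forall_le_add_div_mul_pow (M := numSubspaces r s) ht ht1
    (by exact_mod_cast one_le_numSubspaces hsr)
    fun n => by simpa only [div_inv_eq_mul] using G1_le_add_mul_pow r s n
  have hN := log_numSubspaces_add_le (by omega) hsr
  calc (G1 r s : ℝ) < _ := hG
    _ = 2 ^ s * (Real.log (numSubspaces r s) + ((2 : ℝ) ^ s)⁻¹ + 1) := by field_simp
    _ ≤ _ := mul_le_mul_of_nonneg_left (by linarith) (by positivity)
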